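/- The set S = {(a,b) ∈ F_p^2 : b < a} has exactly 3 special directions, namely the vertical direction, the horizontal direction, and the direction of slope 1. -/

import Mathlib

/-- Number of points of `S` on the line through `x` with direction vector `u`. -/
def lineCount (p : ℕ) [Fact p.Prime] (S : Finset (ZMod p × ZMod p))
    (u x : ZMod p × ZMod p) : ℕ :=
  (S.filter fun w => ∃ t : ZMod p, w = x + t • u).card

/-- Direction vectors of the `p+1` directions: `some m` has slope `m`, `none` is vertical. -/
def dirVec (p : ℕ) : Option (ZMod p) → ZMod p × ZMod p
  | none => (0, 1)
  | some m => (1, m)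

/-- `S` is equidistributed in the direction of the vector `u`. -/
def Equidistributed (p : ℕ) [Fact p.Prime] (S : Finset (ZMod p × ZMod p))
    (u : ZMod p × ZMod p) : Prop :=
  ∀ x y : ZMod p × ZMod p, lineCount p S u x = lineCount p S u y

open Classical in
/-- The set of special (non-equidistributed) directions of `S`. -/
noncomputable def specialDirs (p : ℕ) [Fact p.Prime] (S : Finset (ZMod p × ZMod p)) :
    Finset (Option (ZMod p)) :=
  Finset.univ.filter fun d => ¬ Equidistributed p S (dirVec p d)

/-- The triangle set `{(a,b) : b < a}` with coordinates identified with `{0,…,p-1}`. -/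
def triangle (p : ℕ) [Fact p.Prime] : Finset (ZMod p × ZMod p) :=
  Finset.univ.filter fun w => w.2.val < w.1.val

/-!
In the vertical direction and the directions of slope `0` and `1` some line misses `S` and some
line meets it. For a slope `m ∉ {0, 1}`, the line through `x` is `t ↦ (x.1 + t, x.2 + m t)`,
and its point lies in `S` exactly when adding `g t = (x.2 - x.1) + (m - 1) t` to `x.1 + t`
wraps around `p`. All three of `x.1 + t`, `g t` and their sum are permutations of `ZMod p`, so
summing `a.val + b.val = (a + b).val + p·[wrap]` over `t` gives
`p · #wraps = ∑ a, a.val = p (p - 1) / 2`: every such line has `(p - 1) / 2` points.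
-/

open Finset Function

namespace ZMod

variable {n : ℕ} [NeZero n]

theorem sum_val_mul_two : (∑ x : ZMod n, x.val) * 2 = n * (n - 1) := by
  obtain ⟨k, rfl⟩ : ∃ k, n = k + 1 := Nat.exists_eq_succ_of_ne_zero (NeZero.ne n)
  rw [← sum_range_id_mul_two, ← Fin.sum_univ_eq_sum_range (fun i => i)]
  rfl

theorem val_add_val (a b : ZMod n) :
    a.val + b.val = (a + b).val + if (a + b).val < a.val then n else 0 := by
  by_cases h : n ≤ a.val + b.val
  · have hb := b.val_lt
    have hwrap := val_add_val_of_le h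
    rw [if_pos (by omega), hwrap]
  · rw [val_add_of_lt (not_le.mp h), if_neg (by omega), add_zero]

theorem two_mul_card_val_add_lt_val {f g : ZMod n → ZMod n} (hf : Bijective f)
    (hg : Bijective g) (hfg : Bijective fun t => f t + g t) :
    2 * #{t | (f t + g t).val < (f t).val} = n - 1 := by
  have hsum := Finset.sum_congr rfl fun t (_ : t ∈ univ) => val_add_val (f t) (g t)
  rw [sum_add_distrib, sum_add_distrib, hf.sum_comp val, hg.sum_comp val,
    hfg.sum_comp val, sum_ite, sum_const, sum_const_zero, add_zero, smul_eq_mul] at hsum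
  have hn := sum_val_mul_two (n := n)
  have : n * (2 * #{t | (f t + g t).val < (f t).val}) = n * (n - 1) := by linarith
  exact Nat.eq_of_mul_eq_mul_left (NeZero.pos n) this

end ZMod

theorem bijective_const_add_mul {K : Type*} [DivisionRing K] (b : K) {a : K} (ha : a ≠ 0) :
    Bijective fun t => b + a * t :=
  (AddGroup.addLeft_bijective b).comp (mulLeft_bijective₀ a ha)

section Lines

variable (p : ℕ) [Fact p.Prime]

theorem lineCount_eq_card_filter (S : Finset (ZMod p × ZMod p)) {u : ZMod p × ZMod p}
    (hu : u ≠ 0) (x : ZMod p × ZMod p) : lineCount p S u x = #{t : ZMod p | x + t • u ∈ S} := by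
  symm
  refine card_bij (fun t _ => x + t • u) (fun t ht => ?_) (fun t _ s _ hts => ?_) fun w hw => ?_
  · simp only [mem_filter, mem_univ, true_and] at ht ⊢
    exact ⟨ht, t, rfl⟩
  · exact smul_left_injective (ZMod p) hu (add_left_cancel hts)
  · obtain ⟨hw, t, rfl⟩ := mem_filter.mp hw
    exact ⟨t, by simpa using hw, rfl⟩

theorem lineCount_triangle {u : ZMod p × ZMod p} (hu : u ≠ 0) (x : ZMod p × ZMod p) :
    lineCount p (triangle p) u x = #{t | (x.2 + t * u.2).val < (x.1 + t * u.1).val} := by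
  simp [lineCount_eq_card_filter p _ hu, triangle]

theorem mem_specialDirs {S : Finset (ZMod p × ZMod p)} {d : Option (ZMod p)} :
    d ∈ specialDirs p S ↔ ¬ Equidistributed p S (dirVec p d) := by
  classical
  simp [specialDirs]

theorem not_equidistributed_triangle_vertical : ¬ Equidistributed p (triangle p) (0, 1) := by
  have hempty : lineCount p (triangle p) (0, 1) (0, 0) = 0 := by
    simp [lineCount_triangle]
  have hpos : 0 < lineCount p (triangle p) (0, 1) (1, 0) := by
    rw [lineCount_triangle p (by simp)]
    exact card_pos.mpr ⟨0, by simp⟩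
  exact fun h => hpos.ne' (h _ _ ▸ hempty)

theorem not_equidistributed_triangle_horizontal : ¬ Equidistributed p (triangle p) (1, 0) := by
  have hempty : lineCount p (triangle p) (1, 0) (0, -1) = 0 := by
    rw [lineCount_triangle p (by simp), card_eq_zero, filter_eq_empty_iff]
    intro t _
    have := t.val_lt
    simp [ZMod.val_neg_of_ne_zero, ZMod.val_one'' (Fact.out : p.Prime).ne_one]
    omega
  have hpos : 0 < lineCount p (triangle p) (1, 0) (0, 0) := by
    rw [lineCount_triangle p (by simp)]
    exact card_pos.mpr ⟨1, by simp⟩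
  exact fun h => hpos.ne' (h _ _ ▸ hempty)

theorem not_equidistributed_triangle_diagonal : ¬ Equidistributed p (triangle p) (1, 1) := by
  have hempty : lineCount p (triangle p) (1, 1) (0, 0) = 0 := by
    simp [lineCount_triangle]
  have hpos : 0 < lineCount p (triangle p) (1, 1) (0, 1) := by
    rw [lineCount_triangle p (by simp)]
    exact card_pos.mpr ⟨-1, by simp [ZMod.val_pos]⟩
  exact fun h => hpos.ne' (h _ _ ▸ hempty)

theorem two_mul_lineCount_triangle {m : ZMod p} (hm0 : m ≠ 0) (hm1 : m ≠ 1)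
    (x : ZMod p × ZMod p) : 2 * lineCount p (triangle p) (1, m) x = p - 1 := by
  have key := ZMod.two_mul_card_val_add_lt_val (f := fun t => x.1 + t)
    (g := fun t => (x.2 - x.1) + (m - 1) * t) (AddGroup.addLeft_bijective x.1)
    (bijective_const_add_mul _ (sub_ne_zero.mpr hm1))
    (by convert bijective_const_add_mul x.2 hm0 using 2 with t; ring)
  have hline : ∀ t, x.2 + t * m = x.1 + t + ((x.2 - x.1) + (m - 1) * t) := fun t => by ring
  simpa only [lineCount_triangle p (u := (1, m)) (by simp), hline, mul_one] using key

theorem equidistributed_triangle {m : ZMod p} (hm0 : m ≠ 0) (hm1 : m ≠ 1) :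
    Equidistributed p (triangle p) (1, m) := fun x y => by
  have hx := two_mul_lineCount_triangle p hm0 hm1 x
  have hy := two_mul_lineCount_triangle p hm0 hm1 y
  omega

end Lines

theorem stmt_6_general (p : ℕ) [Fact p.Prime] :
    specialDirs p (triangle p) = {none, some 0, some 1} := by
  ext (_ | m) <;> simp only [mem_specialDirs, dirVec, mem_insert,
    mem_singleton, reduceCtorEq, Option.some_inj, false_or, true_or, iff_true]
  · exact not_equidistributed_triangle_vertical p
  · by_cases hm0 : m = 0
    · simpa [hm0] using not_equidistributed_triangle_horizontal p
    by_cases hm1 : m = 1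
    · simpa [hm1] using not_equidistributed_triangle_diagonal p
    simpa [hm0, hm1] using equidistributed_triangle p hm0 hm1

theorem stmt_6 (p : ℕ) [Fact p.Prime] (hodd : Odd p) (hp3 : 3 ≤ p) :
    specialDirs p (triangle p) = {none, some 0, some 1} :=
  stmt_6_general p
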